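/- arXiv:1605.00086 — 4 statements merged into one kernel-verified Lean document; each statement's English description precedes it below -/
import Mathlib

section
/- Let 0 < a < 1 and s > 0. Then ∫_0^∞ e^{−st} · (e^{−t}/π) · [∫_0^∞ (y^{−a} e^{−yt} / (1+y)) · (π cos(πa) − log(y) sin(πa)) dy] dt = log(1+s) / (s (1+s)^a). -/
/-!
Swapping the two integrals (the integrand is absolutely integrable on the quadrant) turns the
left-hand side into `π⁻¹ ∫ g y / ((1 + y) (1 + s + y)) dy` with
`g y = y ^ (-a) * (π cos (πa) - log y sin (πa))`, since the Laplace transform of `e^{-yt}` at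
`1 + s` is `1 / (1 + s + y)`. After partial fractions it remains to know the Stieltjes transform
`∫ g y / (c + y) dy = -π c ^ (-a) log c`, which vanishes at `c = 1`. This follows from the
reflection formula `∫ y ^ (-a) / (c + y) dy = π c ^ (-a) / sin (πa)` (an iterated Laplace
transform evaluated with `Γ(a) Γ(1 - a) = π / sin (πa)`) together with its derivative in `a`,
which produces the logarithm.
-/

open Real MeasureTheory Set Function

theorem integral_mul_exp_neg_mul_Ioi (g : ℝ) {r : ℝ} (hr : 0 < r) :
    ∫ t in Ioi 0, g * exp (-r * t) = g / r := by
  rw [integral_const_mul, integral_exp_mul_Ioi (neg_lt_zero.2 hr), mul_zero, exp_zero]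
  field_simp

theorem integral_exp_mul_integral_mul_exp_eq_integral_div_add {f : ℝ → ℝ} {c : ℝ}
    (hc : 0 < c) (hf : Measurable f) (hfc : IntegrableOn (fun y ↦ f y / (c + y)) (Ioi 0)) :
    ∫ t in Ioi 0, exp (-c * t) * ∫ y in Ioi 0, f y * exp (-y * t)
      = ∫ y in Ioi 0, f y / (c + y) := by
  set F : ℝ → ℝ → ℝ := fun t y ↦ exp (-c * t) * (f y * exp (-y * t))
  have hF_eq : ∀ t y, F t y = f y * exp (-(c + y) * t) := fun t y ↦ by
    simp only [F]; rw [show -(c + y) * t = -c * t + -y * t by ring, exp_add]; ring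
  have hF_int :
      Integrable (uncurry F) ((volume.restrict (Ioi 0)).prod (volume.restrict (Ioi 0))) := by
    refine (integrable_prod_iff' (by fun_prop)).2 ⟨?_, ?_⟩
    · filter_upwards [self_mem_ae_restrict measurableSet_Ioi] with y (hy : 0 < y)
      simp only [uncurry_apply_pair, hF_eq]
      exact (integrableOn_exp_mul_Ioi (by linarith) 0).const_mul _
    · refine IntegrableOn.congr_fun hfc.norm (fun y (hy : 0 < y) ↦ ?_) measurableSet_Ioi
      simp only [uncurry_apply_pair, hF_eq, norm_mul, norm_of_nonneg (exp_pos _).le]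
      rw [integral_mul_exp_neg_mul_Ioi _ (by linarith), norm_div,
        norm_of_nonneg (show 0 ≤ c + y by linarith)]
  calc _ = ∫ t in Ioi 0, ∫ y in Ioi 0, F t y := by simp only [F, ← integral_const_mul]
    _ = ∫ y in Ioi 0, ∫ t in Ioi 0, F t y := integral_integral_swap hF_int
    _ = _ := setIntegral_congr_fun measurableSet_Ioi fun y (hy : 0 < y) ↦ by
      simp only [hF_eq, integral_mul_exp_neg_mul_Ioi _ (show 0 < c + y by linarith)]

theorem integrableOn_rpow_div_add {r c : ℝ} (hr₀ : -1 < r) (hr₁ : r < 0) (hc : 0 < c) :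
    IntegrableOn (fun y ↦ y ^ r / (c + y)) (Ioi 0) := by
  have hmeas : AEStronglyMeasurable (fun y : ℝ ↦ y ^ r / (c + y)) :=
    (by fun_prop : Measurable fun y : ℝ ↦ y ^ r / (c + y)).aestronglyMeasurable
  rw [← Ioc_union_Ioi_eq_Ioi zero_le_one]
  refine IntegrableOn.union ?_ ?_
  · have hdom : IntegrableOn (fun y : ℝ ↦ c⁻¹ * y ^ r) (Ioc 0 1) :=
      ((intervalIntegrable_iff_integrableOn_Ioc_of_le zero_le_one).1
        (intervalIntegral.intervalIntegrable_rpow' hr₀)).const_mul _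
    refine hdom.mono' hmeas.restrict ?_
    filter_upwards [self_mem_ae_restrict measurableSet_Ioc] with y ⟨hy, _⟩
    rw [norm_of_nonneg (by positivity), div_eq_inv_mul]
    gcongr
    linarith
  · refine (integrableOn_Ioi_rpow_of_lt (show r - 1 < -1 by linarith) one_pos).mono'
      hmeas.restrict ?_
    filter_upwards [self_mem_ae_restrict measurableSet_Ioi] with y (hy : 1 < y)
    rw [norm_of_nonneg (by positivity), rpow_sub_one (by positivity)]
    gcongr
    linarith

theorem abs_log_le_rpow_add_rpow_neg_div {y ε : ℝ} (hy : 0 < y) (hε : 0 < ε) :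
    |log y| ≤ (y ^ ε + y ^ (-ε)) / ε := by
  have h₁ := log_le_rpow_div hy.le hε
  have h₂ := log_le_rpow_div (inv_pos.2 hy).le hε
  rw [log_inv, inv_rpow hy.le, ← rpow_neg hy.le] at h₂
  have : 0 ≤ y ^ ε / ε := by positivity
  have : 0 ≤ y ^ (-ε) / ε := by positivity
  rw [add_div, abs_le]
  constructor <;> linarith

theorem integrableOn_rpow_mul_abs_log_div_add {q c : ℝ} (hq₀ : -1 < q) (hq₁ : q < 0)
    (hc : 0 < c) : IntegrableOn (fun y ↦ y ^ q * |log y| / (c + y)) (Ioi 0) := by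
  obtain ⟨ε, hε, hε₀, hε₁⟩ : ∃ ε : ℝ, 0 < ε ∧ -1 < q - ε ∧ q + ε < 0 :=
    ⟨min (1 + q) (-q) / 2,
      by have := lt_min (neg_lt_iff_pos_add'.1 hq₀) (neg_pos.2 hq₁); positivity,
      by linarith [min_le_left (1 + q) (-q)], by linarith [min_le_right (1 + q) (-q)]⟩
  have hdom :
      IntegrableOn (fun y ↦ (y ^ (q + ε) / (c + y) + y ^ (q - ε) / (c + y)) / ε) (Ioi 0) :=
    ((integrableOn_rpow_div_add (by linarith) hε₁ hc).add
      (integrableOn_rpow_div_add hε₀ (by linarith) hc)).div_const ε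
  refine hdom.mono'
    (by fun_prop : Measurable fun y ↦ y ^ q * |log y| / (c + y)).aestronglyMeasurable ?_
  filter_upwards [self_mem_ae_restrict measurableSet_Ioi] with y (hy : 0 < y)
  rw [norm_of_nonneg (by positivity), ← add_div, div_right_comm]
  gcongr
  calc y ^ q * |log y| ≤ y ^ q * ((y ^ ε + y ^ (-ε)) / ε) := by
        gcongr; exact abs_log_le_rpow_add_rpow_neg_div hy hε
    _ = _ := by rw [rpow_add hy, rpow_sub hy, rpow_neg hy.le]; field_simp

theorem integrableOn_rpow_mul_log_div_add {q c : ℝ} (hq₀ : -1 < q) (hq₁ : q < 0)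
    (hc : 0 < c) : IntegrableOn (fun y ↦ y ^ q * log y / (c + y)) (Ioi 0) := by
  refine (integrableOn_rpow_mul_abs_log_div_add hq₀ hq₁ hc).mono'
    (by fun_prop : Measurable fun y ↦ y ^ q * log y / (c + y)).aestronglyMeasurable ?_
  filter_upwards [self_mem_ae_restrict measurableSet_Ioi] with y (hy : 0 < y)
  rw [norm_div, norm_mul, norm_of_nonneg (rpow_nonneg hy.le q), norm_eq_abs,
    norm_of_nonneg (show 0 ≤ c + y by linarith)]

theorem integral_rpow_neg_div_add {a c : ℝ} (ha₀ : 0 < a) (ha₁ : a < 1) (hc : 0 < c) :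
    ∫ y in Ioi 0, y ^ (-a) / (c + y) = π * c ^ (-a) / sin (π * a) := by
  have hlaplace : ∀ t ∈ Ioi (0 : ℝ), ∫ y in Ioi 0, y ^ (-a) * exp (-y * t)
      = Gamma (1 - a) * t ^ (a - 1) := fun t (ht : 0 < t) ↦ by
    have := integral_rpow_mul_exp_neg_mul_Ioi (a := 1 - a) (by linarith) ht
    simp only [sub_sub_cancel_left, mul_comm t, ← neg_mul] at this
    rw [this, one_div, inv_rpow ht.le, ← rpow_neg ht.le, neg_sub, mul_comm]
  rw [← integral_exp_mul_integral_mul_exp_eq_integral_div_add hc (by fun_prop)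
      (integrableOn_rpow_div_add (by linarith) (by linarith) hc),
    setIntegral_congr_fun (g := fun t ↦ Gamma (1 - a) * (t ^ (a - 1) * exp (-(c * t))))
      measurableSet_Ioi fun t ht ↦ by rw [hlaplace t ht, neg_mul]; ring,
    integral_const_mul, integral_rpow_mul_exp_neg_mul_Ioi ha₀ hc, one_div, inv_rpow hc.le,
    ← rpow_neg hc.le, mul_div_right_comm, ← Gamma_mul_Gamma_one_sub]
  ring

theorem sin_pi_mul_pos {a : ℝ} (ha₀ : 0 < a) (ha₁ : a < 1) : 0 < sin (π * a) :=
  sin_pos_of_pos_of_lt_pi (by positivity) (by nlinarith [pi_pos])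

theorem rpow_le_rpow_add_rpow_of_mem_Icc {y p q x : ℝ} (hy : 0 < y) (hx : x ∈ Icc p q) :
    y ^ x ≤ y ^ p + y ^ q := by
  rcases le_total y 1 with h | h
  · linarith [rpow_le_rpow_of_exponent_ge hy h hx.1, rpow_nonneg hy.le q]
  · linarith [rpow_le_rpow_of_exponent_le h hx.2, rpow_nonneg hy.le p]

theorem hasDerivAt_rpow_neg_const {y : ℝ} (hy : 0 < y) (x : ℝ) :
    HasDerivAt (fun α ↦ y ^ (-α)) (-(y ^ (-x) * log y)) x :=
  ((hasDerivAt_neg x).const_rpow hy).congr_deriv (by ring)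

theorem hasDerivAt_integral_rpow_neg_div_add {a c : ℝ} (ha₀ : 0 < a) (ha₁ : a < 1)
    (hc : 0 < c) :
    HasDerivAt (fun α ↦ ∫ y in Ioi 0, y ^ (-α) / (c + y))
      (∫ y in Ioi 0, -(y ^ (-a) * log y / (c + y))) a := by
  obtain ⟨δ, hδ, hδ₀, hδ₁⟩ : ∃ δ : ℝ, 0 < δ ∧ 0 < a - δ ∧ a + δ < 1 :=
    ⟨min a (1 - a) / 2, by have := lt_min ha₀ (sub_pos.2 ha₁); positivity,
      by linarith [min_le_left a (1 - a)], by linarith [min_le_right a (1 - a)]⟩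
  have hmeas (α : ℝ) : Measurable fun y : ℝ ↦ y ^ (-α) / (c + y) := by fun_prop
  refine (hasDerivAt_integral_of_dominated_loc_of_deriv_le
    (F := fun α y ↦ y ^ (-α) / (c + y)) (F' := fun α y ↦ -(y ^ (-α) * log y / (c + y)))
    (Metric.ball_mem_nhds a hδ)
    (.of_forall fun α ↦ (hmeas α).aestronglyMeasurable)
    (integrableOn_rpow_div_add (by linarith) (by linarith) hc)
    (by fun_prop : Measurable fun y : ℝ ↦ -(y ^ (-a) * log y / (c + y))).aestronglyMeasurable
    (bound := fun y ↦ y ^ (-(a + δ)) * |log y| / (c + y) + y ^ (-(a - δ)) * |log y| / (c + y))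
    ?_ ((integrableOn_rpow_mul_abs_log_div_add (by linarith) (by linarith) hc).add
      (integrableOn_rpow_mul_abs_log_div_add (by linarith) (by linarith) hc)) ?_).2
  · filter_upwards [self_mem_ae_restrict measurableSet_Ioi] with y (hy : 0 < y) x hx
    rw [Metric.mem_ball, dist_eq_norm, norm_eq_abs, abs_sub_lt_iff] at hx
    rw [norm_neg, norm_div, norm_mul, norm_of_nonneg (rpow_nonneg hy.le _), norm_eq_abs,
      norm_of_nonneg (show 0 ≤ c + y by linarith), ← add_div, ← add_mul]
    gcongr
    exact rpow_le_rpow_add_rpow_of_mem_Icc hy ⟨by linarith, by linarith⟩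
  · filter_upwards [self_mem_ae_restrict measurableSet_Ioi] with y (hy : 0 < y) x _
    simpa only [neg_div] using (hasDerivAt_rpow_neg_const hy x).div_const (c + y)

theorem integral_rpow_neg_mul_log_div_add {a c : ℝ} (ha₀ : 0 < a) (ha₁ : a < 1)
    (hc : 0 < c) :
    ∫ y in Ioi 0, y ^ (-a) * log y / (c + y)
      = π * c ^ (-a) * (log c * sin (π * a) + π * cos (π * a)) / sin (π * a) ^ 2 := by
  have hsin := (sin_pi_mul_pos ha₀ ha₁).ne'
  have hclosed : HasDerivAt (fun α ↦ π * c ^ (-α) / sin (π * α))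
      ((π * -(c ^ (-a) * log c) * sin (π * a) - π * c ^ (-a) * (cos (π * a) * π))
        / sin (π * a) ^ 2) a :=
    ((hasDerivAt_rpow_neg_const hc a).const_mul π).div
      ((hasDerivAt_id a).const_mul π).sin (by simpa using hsin) |>.congr_deriv (by simp)
  have hagree : (fun α ↦ ∫ y in Ioi 0, y ^ (-α) / (c + y)) =ᶠ[nhds a]
      fun α ↦ π * c ^ (-α) / sin (π * α) := by
    filter_upwards [Ioo_mem_nhds ha₀ ha₁] with α hα
    exact integral_rpow_neg_div_add hα.1 hα.2 hc
  have := (hasDerivAt_integral_rpow_neg_div_add ha₀ ha₁ hc).unique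
    (hclosed.congr_of_eventuallyEq hagree)
  rw [integral_neg, neg_eq_iff_eq_neg] at this
  rw [this]
  field_simp
  ring

theorem integrableOn_rpow_neg_mul_cos_sub_log_mul_sin_div_add {a c : ℝ} (ha₀ : 0 < a)
    (ha₁ : a < 1) (hc : 0 < c) :
    IntegrableOn (fun y ↦ y ^ (-a) * (π * cos (π * a) - log y * sin (π * a)) / (c + y))
      (Ioi 0) := by
  have hpow := integrableOn_rpow_div_add (r := -a) (by linarith) (by linarith) hc
  have hlog := integrableOn_rpow_mul_log_div_add (q := -a) (by linarith) (by linarith) hc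
  refine IntegrableOn.congr_fun ((hpow.const_mul (π * cos (π * a))).sub
    (hlog.const_mul (sin (π * a)))) (fun y _ ↦ by simp only [Pi.sub_apply]; ring)
    measurableSet_Ioi

theorem integral_rpow_neg_mul_cos_sub_log_mul_sin_div_add {a c : ℝ} (ha₀ : 0 < a)
    (ha₁ : a < 1) (hc : 0 < c) :
    ∫ y in Ioi 0, y ^ (-a) * (π * cos (π * a) - log y * sin (π * a)) / (c + y)
      = -(π * c ^ (-a) * log c) := by
  have hsin := (sin_pi_mul_pos ha₀ ha₁).ne'
  have hpow := integrableOn_rpow_div_add (r := -a) (by linarith) (by linarith) hc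
  have hlog := integrableOn_rpow_mul_log_div_add (q := -a) (by linarith) (by linarith) hc
  calc _ = π * cos (π * a) * (∫ y in Ioi 0, y ^ (-a) / (c + y))
        - sin (π * a) * ∫ y in Ioi 0, y ^ (-a) * log y / (c + y) := by
        rw [← integral_const_mul, ← integral_const_mul,
          ← integral_sub (hpow.const_mul _) (hlog.const_mul _)]
        congr 1 with y
        ring
    _ = _ := by
        rw [integral_rpow_neg_div_add ha₀ ha₁ hc,
          integral_rpow_neg_mul_log_div_add ha₀ ha₁ hc]
        field_simp
        ring

/-- Laplace-inversion identity underlying the integral representation of the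
density of the inverse gamma process: for `0 < a < 1` and `s > 0`,
`∫_0^∞ e^{−st} (e^{−t}/π) [∫_0^∞ (y^{−a} e^{−yt}/(1+y)) (π cos(πa) − log y · sin(πa)) dy] dt
  = log(1+s)/(s (1+s)^a)`. -/
theorem laplace_transform_inverse_gamma_density (a s : ℝ)
    (ha0 : 0 < a) (ha1 : a < 1) (hs : 0 < s) :
    ∫ t in Set.Ioi (0 : ℝ),
      Real.exp (-s * t) * (Real.exp (-t) / π) *
        (∫ y in Set.Ioi (0 : ℝ),
          (y ^ (-a) * Real.exp (-y * t) / (1 + y)) *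
            (π * Real.cos (π * a) - Real.log y * Real.sin (π * a)))
      = Real.log (1 + s) / (s * (1 + s) ^ a) := by
  set g : ℝ → ℝ := fun y ↦ y ^ (-a) * (π * cos (π * a) - log y * sin (π * a))
  have hc : 0 < 1 + s := by linarith
  have hg : ∀ c, 0 < c → IntegrableOn (fun y ↦ g y / (c + y)) (Ioi 0) := fun _ hc ↦
    integrableOn_rpow_neg_mul_cos_sub_log_mul_sin_div_add ha0 ha1 hc
  have hpartial : ∀ y ∈ Ioi (0 : ℝ),
      g y / (1 + y) / (1 + s + y) = (g y / (1 + y) - g y / (1 + s + y)) / s :=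
    fun y (hy : 0 < y) ↦ by field_simp; ring
  have hg_partial : IntegrableOn (fun y ↦ g y / (1 + y) / (1 + s + y)) (Ioi 0) :=
    IntegrableOn.congr_fun (((hg 1 one_pos).sub (hg _ hc)).div_const s)
      (fun y hy ↦ (hpartial y hy).symm) measurableSet_Ioi
  calc _ = π⁻¹ * ∫ t in Ioi 0,
        exp (-(1 + s) * t) * ∫ y in Ioi 0, g y / (1 + y) * exp (-y * t) := by
        simp_rw [← integral_const_mul]
        refine setIntegral_congr_fun measurableSet_Ioi fun t _ ↦
          setIntegral_congr_fun measurableSet_Ioi fun y _ ↦ ?_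
        rw [show -(1 + s) * t = -s * t + -t by ring, exp_add]
        ring
    _ = π⁻¹ * (((∫ y in Ioi 0, g y / (1 + y)) - ∫ y in Ioi 0, g y / (1 + s + y)) / s) := by
        rw [integral_exp_mul_integral_mul_exp_eq_integral_div_add hc (by simp only [g]; fun_prop)
          hg_partial, setIntegral_congr_fun measurableSet_Ioi hpartial, integral_div,
          integral_sub (hg 1 one_pos) (hg _ hc)]
    _ = _ := by
        simp only [g, integral_rpow_neg_mul_cos_sub_log_mul_sin_div_add ha0 ha1 one_pos,
          integral_rpow_neg_mul_cos_sub_log_mul_sin_div_add ha0 ha1 hc, log_one, rpow_neg hc.le]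
        field_simp
        ring
end

section
/- Fix t > 0 and ν > 0. Then as x → ∞, the quotient [ (∫_0^t y^{x/ν − 1} e^{−y} dy) / Γ(x/ν) ] / [ (2πx/ν)^{−1/2} · e^{x/ν − t} · (νt/x)^{x/ν} ] tends to 1. -/
/-!
Put `a = x / ν`. The quotient is then
`(γ(a, t) / (e^{-t} t^a / a)) / (Γ(a) / (√(2π) a^{a - 1/2} e^{-a}))`.

The first factor tends to `1`: on `[0, t]` the weight `e^{-y}` differs from `e^{-t}` by at most
`t - y`, and `∫₀ᵗ (t - y) y^{a-1} dy` is smaller than `t^a / a` by a factor `O(1/a)`.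

The second factor tends to `1` by Stirling's formula for the real Gamma function. Along the
integers this is Stirling's formula for `n!`; in between, log-convexity of `Γ` keeps the
logarithm of the second factor at `b + θ` (`0 ≤ θ ≤ 1`) within `1/(2b)` of its value at `b`.
-/

open Real Filter MeasureTheory Topology Set

noncomputable def lowerIncGamma (a z : ℝ) : ℝ := ∫ y in Ioc 0 z, y ^ (a - 1) * exp (-y)

noncomputable def logStirlingError (a : ℝ) : ℝ :=
  log (Gamma a) - ((a - 1 / 2) * log a - a + log (2 * π) / 2)

lemma logStirlingError_natCast {n : ℕ} (hn : n ≠ 0) :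
    logStirlingError n = log (Stirling.stirlingSeq n) - log π / 2 := by
  have hn₀ : (0 : ℝ) < n := by positivity
  have hGamma : Gamma n * n = n.factorial := by
    rw [mul_comm, ← Real.Gamma_add_one hn₀.ne', Real.Gamma_nat_eq_factorial]
  have hlogGamma : log (Gamma n) = log n.factorial - log n := by
    rw [← hGamma, log_mul (Real.Gamma_pos_of_pos hn₀).ne' hn₀.ne']
    ring
  rw [logStirlingError, Stirling.log_stirlingSeq_formula, hlogGamma,
    log_mul two_ne_zero hn₀.ne', log_mul two_ne_zero pi_ne_zero,
    log_div hn₀.ne' (exp_ne_zero 1), log_exp]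
  ring

lemma tendsto_logStirlingError_natCast :
    Tendsto (fun n : ℕ ↦ logStirlingError n) atTop (𝓝 0) := by
  have hlim := (Stirling.tendsto_stirlingSeq_sqrt_pi.log (by positivity)).sub_const (log π / 2)
  rw [log_sqrt pi_pos.le, sub_self] at hlim
  refine hlim.congr' ?_
  filter_upwards [eventually_ne_atTop 0] with n hn
  rw [logStirlingError_natCast hn]

lemma log_Gamma_add_le {x θ : ℝ} (hx : 0 < x) (hθ₀ : 0 ≤ θ) (hθ₁ : θ ≤ 1) :
    log (Gamma (x + θ)) ≤ log (Gamma x) + θ * log x := by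
  have hconv := convexOn_log_Gamma.2 (mem_Ioi.2 hx) (mem_Ioi.2 (by linarith : 0 < x + 1))
    (sub_nonneg.2 hθ₁) hθ₀ (sub_add_cancel 1 θ)
  simp only [smul_eq_mul, Function.comp_apply] at hconv
  rw [Real.Gamma_add_one hx.ne', log_mul hx.ne' (Real.Gamma_pos_of_pos hx).ne',
    show (1 - θ) * x + θ * (x + 1) = x + θ by ring] at hconv
  linarith

lemma abs_logStirlingError_add_sub_le {x θ : ℝ} (hx : 1 / 2 ≤ x) (hθ₀ : 0 ≤ θ) (hθ₁ : θ ≤ 1) :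
    |logStirlingError (x + θ) - logStirlingError x| ≤ 1 / (2 * x) := by
  have hx₀ : 0 < x := by linarith
  have hxθ : 0 < x + θ := by linarith
  have hupper := log_Gamma_add_le hx₀ hθ₀ hθ₁
  have hlower := log_Gamma_add_le hxθ (sub_nonneg.2 hθ₁) (by linarith : 1 - θ ≤ 1)
  rw [show x + θ + (1 - θ) = x + 1 by ring, Real.Gamma_add_one hx₀.ne',
    log_mul hx₀.ne' (Real.Gamma_pos_of_pos hx₀).ne'] at hlower
  have hlog_ge : θ / (x + θ) ≤ log (x + θ) - log x := by
    have := one_sub_inv_le_log_of_pos (div_pos hxθ hx₀)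
    rwa [log_div hxθ.ne' hx₀.ne', inv_div, one_sub_div hxθ.ne', add_sub_cancel_left] at this
  have hlog_le : log (x + θ) - log x ≤ θ / x := by
    have := log_le_sub_one_of_pos (div_pos hxθ hx₀)
    rwa [log_div hxθ.ne' hx₀.ne', div_sub_one hx₀.ne', add_sub_cancel_left] at this
  have hmul_ge := mul_le_mul_of_nonneg_left hlog_ge (by linarith : 0 ≤ x + θ - 1 / 2)
  have hmul_le := mul_le_mul_of_nonneg_left hlog_le (by linarith : 0 ≤ x + 1 / 2)
  have hexpand_ge : (x + θ - 1 / 2) * (θ / (x + θ)) = θ - θ / (2 * (x + θ)) := by field_simp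
  have hexpand_le : (x + 1 / 2) * (θ / x) = θ + θ / (2 * x) := by field_simp
  have hsmall₁ : θ / (2 * (x + θ)) ≤ 1 / (2 * x) := by gcongr; linarith
  have hsmall₂ : θ / (2 * x) ≤ 1 / (2 * x) := by gcongr
  rw [abs_sub_le_iff]
  constructor
  all_goals simp only [logStirlingError]; linarith

lemma tendsto_logStirlingError : Tendsto logStirlingError atTop (𝓝 0) := by
  have hfloor := tendsto_logStirlingError_natCast.comp (tendsto_nat_floor_atTop (α := ℝ))
  have hbound : Tendsto (fun a : ℝ ↦ 1 / (2 * (⌊a⌋₊ : ℝ))) atTop (𝓝 0) :=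
    tendsto_const_nhds.div_atTop <| (tendsto_natCast_atTop_atTop.comp
      (tendsto_nat_floor_atTop (α := ℝ))).const_mul_atTop two_pos
  have hdiff : Tendsto (fun a : ℝ ↦ logStirlingError a - logStirlingError ⌊a⌋₊) atTop (𝓝 0) := by
    refine squeeze_zero_norm' ?_ hbound
    filter_upwards [eventually_ge_atTop 1] with a ha
    have hfloor_pos : (1 : ℝ) ≤ ⌊a⌋₊ := by exact_mod_cast (Nat.one_le_floor_iff a).2 ha
    have := abs_logStirlingError_add_sub_le (x := ⌊a⌋₊) (θ := a - ⌊a⌋₊) (by linarith)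
      (sub_nonneg.2 (Nat.floor_le (by linarith))) (by linarith [Nat.lt_floor_add_one a])
    rwa [add_sub_cancel, ← Real.norm_eq_abs] at this
  simpa using hfloor.add hdiff

lemma exp_neg_sub_exp_neg_le {y t : ℝ} (hy : 0 ≤ y) (hyt : y ≤ t) :
    exp (-y) - exp (-t) ≤ t - y := by
  have hsplit : exp (-t) = exp (-y) * exp (y - t) := by rw [← exp_add]; ring_nf
  have hexp_le : exp (-y) ≤ 1 := exp_le_one_iff.2 (neg_nonpos.2 hy)
  have htangent : 1 - (t - y) ≤ exp (y - t) := by linarith [add_one_le_exp (y - t)]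
  nlinarith [mul_le_mul_of_nonneg_left htangent (exp_pos (-y)).le]

lemma integral_Ioc_rpow {t r : ℝ} (ht : 0 ≤ t) (hr : -1 < r) :
    ∫ y in Ioc 0 t, y ^ r = t ^ (r + 1) / (r + 1) := by
  rw [← intervalIntegral.integral_of_le ht, integral_rpow (Or.inl hr),
    zero_rpow (by linarith), sub_zero]

section lowerIncGamma

variable {a t : ℝ}

lemma integrableOn_rpow_mul_exp_neg (ha : 0 < a) :
    IntegrableOn (fun y ↦ y ^ (a - 1) * exp (-y)) (Ioc 0 t) :=
  ((GammaIntegral_convergent ha).mono_set Ioc_subset_Ioi_self).congr_fun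
    (fun _ _ ↦ mul_comm _ _) measurableSet_Ioc

lemma exp_neg_mul_rpow_div_le_lowerIncGamma (ht : 0 ≤ t) (ha : 0 < a) :
    exp (-t) * t ^ a / a ≤ lowerIncGamma a t := by
  have hint : IntegrableOn (fun y ↦ exp (-t) * y ^ (a - 1)) (Ioc 0 t) :=
    (intervalIntegral.intervalIntegrable_rpow' (by linarith)).1.const_mul _
  calc exp (-t) * t ^ a / a = ∫ y in Ioc 0 t, exp (-t) * y ^ (a - 1) := by
        rw [integral_const_mul, integral_Ioc_rpow ht (by linarith), sub_add_cancel, mul_div_assoc]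
    _ ≤ lowerIncGamma a t := by
        refine setIntegral_mono_on hint (integrableOn_rpow_mul_exp_neg ha) measurableSet_Ioc ?_
        intro y hy
        rw [mul_comm]
        exact mul_le_mul_of_nonneg_left (exp_le_exp.2 (neg_le_neg hy.2)) (rpow_nonneg hy.1.le _)

lemma lowerIncGamma_le (ht : 0 ≤ t) (ha : 0 < a) :
    lowerIncGamma a t ≤ exp (-t) * t ^ a / a + t ^ (a + 1) / (a * (a + 1)) := by
  have hint₁ : IntegrableOn (fun y ↦ (exp (-t) + t) * y ^ (a - 1)) (Ioc 0 t) :=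
    (intervalIntegral.intervalIntegrable_rpow' (by linarith)).1.const_mul _
  have hint₂ : IntegrableOn (fun y ↦ y ^ a) (Ioc 0 t) :=
    (intervalIntegral.intervalIntegrable_rpow' (by linarith)).1
  calc lowerIncGamma a t ≤ ∫ y in Ioc 0 t, ((exp (-t) + t) * y ^ (a - 1) - y ^ a) := by
        refine setIntegral_mono_on (integrableOn_rpow_mul_exp_neg ha) (hint₁.sub hint₂)
          measurableSet_Ioc ?_
        intro y ⟨hy₀, hyt⟩
        have hpow : y ^ a = y ^ (a - 1) * y := by
          rw [← rpow_add_one hy₀.ne', sub_add_cancel]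
        have := mul_le_mul_of_nonneg_left (exp_neg_sub_exp_neg_le hy₀.le hyt)
          (rpow_nonneg hy₀.le (a - 1))
        rw [hpow]
        linarith
    _ = exp (-t) * t ^ a / a + t ^ (a + 1) / (a * (a + 1)) := by
        rw [integral_sub hint₁ hint₂, integral_const_mul, integral_Ioc_rpow ht (by linarith),
          integral_Ioc_rpow ht (by linarith), sub_add_cancel, rpow_add_one' ht (by linarith)]
        field_simp
        ring

lemma tendsto_lowerIncGamma_div (ht : 0 < t) :
    Tendsto (fun a ↦ lowerIncGamma a t / (exp (-t) * t ^ a / a)) atTop (𝓝 1) := by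
  have hupper : Tendsto (fun a ↦ 1 + exp t * t / (a + 1)) atTop (𝓝 1) := by
    simpa using tendsto_const_nhds.add
      (tendsto_const_nhds.div_atTop (tendsto_atTop_add_const_right atTop (1 : ℝ) tendsto_id))
  refine tendsto_of_tendsto_of_tendsto_of_le_of_le' tendsto_const_nhds hupper ?_ ?_
  all_goals filter_upwards [eventually_gt_atTop 0] with a ha
  · have hpos : 0 < exp (-t) * t ^ a / a := by positivity
    exact (one_le_div hpos).2 (exp_neg_mul_rpow_div_le_lowerIncGamma ht.le ha)
  · have hpos : 0 < exp (-t) * t ^ a / a := by positivity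
    calc lowerIncGamma a t / (exp (-t) * t ^ a / a)
        ≤ (exp (-t) * t ^ a / a + t ^ (a + 1) / (a * (a + 1))) / (exp (-t) * t ^ a / a) := by
          gcongr
          exact lowerIncGamma_le ht.le ha
      _ = 1 + exp t * t / (a + 1) := by
          rw [rpow_add_one ht.ne', exp_neg]
          field_simp

end lowerIncGamma

lemma Gamma_mul_eq_exp_logStirlingError_mul {a t : ℝ} (ha : 0 < a) (ht : 0 < t) :
    Gamma a * ((2 * π * a) ^ (-(1 / 2) : ℝ) * exp (a - t) * (t / a) ^ a) =
      exp (logStirlingError a) * (exp (-t) * t ^ a / a) := by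
  have hratio : exp (-t) * t ^ a / a = exp (-t + a * log t - log a) := by
    rw [exp_sub, exp_add, rpow_def_of_pos ht, exp_log ha, mul_comm a]
  rw [hratio, ← exp_log (Gamma_pos_of_pos ha), rpow_def_of_pos (by positivity),
    rpow_def_of_pos (div_pos ht ha)]
  simp only [← exp_add]
  congr 1
  rw [logStirlingError, log_div ht.ne' ha.ne', log_mul (by positivity) ha.ne']
  ring

/-- Tail asymptotics of the inverse gamma process: for fixed `t > 0` and `ν > 0`,
`γ(x/ν, t)/Γ(x/ν) ∼ (2πx/ν)^{−1/2} e^{x/ν − t} (νt/x)^{x/ν}` as `x → ∞`. -/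
theorem inverse_gamma_tail_asymptotic (t ν : ℝ) (ht : 0 < t) (hν : 0 < ν) :
    Tendsto (fun x : ℝ =>
      ((∫ y in Set.Ioc (0 : ℝ) t, y ^ (x / ν - 1) * Real.exp (-y)) / Real.Gamma (x / ν)) /
        ((2 * π * x / ν) ^ (-(1 / 2) : ℝ) * Real.exp (x / ν - t) * (ν * t / x) ^ (x / ν)))
      atTop (nhds 1) := by
  have hStirling : Tendsto (fun a ↦ exp (logStirlingError a)) atTop (𝓝 1) := by
    simpa using tendsto_logStirlingError.rexp
  have hlim := ((tendsto_lowerIncGamma_div ht).div hStirling one_ne_zero).comp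
    (tendsto_id.atTop_div_const hν)
  rw [div_one] at hlim
  refine hlim.congr' ?_
  filter_upwards [eventually_gt_atTop 0] with x hx
  have ha : 0 < x / ν := div_pos hx hν
  rw [Function.comp_apply, show 2 * π * x / ν = 2 * π * (x / ν) by ring,
    show ν * t / x = t / (x / ν) by field_simp, div_div _ (Gamma _),
    Gamma_mul_eq_exp_logStirlingError_mul ha ht, mul_comm, ← div_div]
  rfl
end

section
/- ∫_0^∞ 1 / ((1+y)((log y)^2 + π^2)) dy = 1/2. -/
open Real MeasureTheory

lemma aux_key (x : ℝ) :
    Real.exp x / ((1 + Real.exp x) * (x ^ 2 + π ^ 2))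
      + Real.exp (-x) / ((1 + Real.exp (-x)) * ((-x) ^ 2 + π ^ 2))
      = (x ^ 2 + π ^ 2)⁻¹ := by
  have h1 : (0:ℝ) < 1 + Real.exp x := by positivity
  have h3 : (0:ℝ) < x ^ 2 + π ^ 2 := by positivity
  have hx : Real.exp x ≠ 0 := (Real.exp_pos x).ne'
  rw [Real.exp_neg, neg_pow]
  field_simp
  ring

lemma aux_k_integrable : Integrable (fun x : ℝ => (x ^ 2 + π ^ 2)⁻¹) := by
  have h : ∀ x : ℝ, (x ^ 2 + π ^ 2)⁻¹ = (π:ℝ)⁻¹ * (π:ℝ)⁻¹ * (1 + (x / π) ^ 2)⁻¹ := by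
    intro x
    have hπ : (π:ℝ) ≠ 0 := Real.pi_ne_zero
    field_simp
    ring
  simp_rw [h]
  exact (integrable_inv_one_add_sq.comp_div Real.pi_ne_zero).const_mul _

lemma aux_k_integral : ∫ x : ℝ, (x ^ 2 + π ^ 2)⁻¹ = 1 := by
  have h : ∀ x : ℝ, (x ^ 2 + π ^ 2)⁻¹ = (π:ℝ)⁻¹ * (π:ℝ)⁻¹ * (1 + (x / π) ^ 2)⁻¹ := by
    intro x
    have hπ : (π:ℝ) ≠ 0 := Real.pi_ne_zero
    field_simp
    ring
  simp_rw [h]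
  rw [MeasureTheory.integral_const_mul, MeasureTheory.Measure.integral_comp_div (fun y : ℝ => (1 + y ^ 2)⁻¹) π,
    integral_univ_inv_one_add_sq, abs_of_pos Real.pi_pos, smul_eq_mul]
  have hπ : (π:ℝ) ≠ 0 := Real.pi_ne_zero
  field_simp

lemma aux_g_integrable :
    Integrable (fun x : ℝ => Real.exp x / ((1 + Real.exp x) * (x ^ 2 + π ^ 2))) := by
  refine aux_k_integrable.mono' ?_ ?_
  · apply Continuous.aestronglyMeasurable
    apply Continuous.div Real.continuous_exp
    · exact ((continuous_const.add Real.continuous_exp).mul (by continuity))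
    · intro x
      have h1 : (0:ℝ) < 1 + Real.exp x := by positivity
      have h3 : (0:ℝ) < x ^ 2 + π ^ 2 := by positivity
      positivity
  · refine Filter.Eventually.of_forall fun x => ?_
    have h1 : (0:ℝ) < 1 + Real.exp x := by positivity
    have h3 : (0:ℝ) < x ^ 2 + π ^ 2 := by positivity
    have hg : (0:ℝ) ≤ Real.exp x / ((1 + Real.exp x) * (x ^ 2 + π ^ 2)) := by positivity
    rw [Real.norm_eq_abs, abs_of_nonneg hg]
    rw [inv_eq_one_div, div_le_div_iff₀ (by positivity) h3]
    nlinarith [Real.exp_pos x, h3.le]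

/-- `∫_0^∞ 1/((1+y)((log y)² + π²)) dy = 1/2`. -/
theorem integral_one_div_log_sq_add_pi_sq :
    ∫ y in Set.Ioi (0 : ℝ),
      1 / ((1 + y) * ((Real.log y) ^ 2 + π ^ 2)) = 1 / 2 := by
  set g : ℝ → ℝ := fun x => Real.exp x / ((1 + Real.exp x) * (x ^ 2 + π ^ 2)) with hg
  have hsub : (∫ y in Set.Ioi (0 : ℝ),
      1 / ((1 + y) * ((Real.log y) ^ 2 + π ^ 2))) = ∫ x : ℝ, g x := by
    have himg : Real.exp '' Set.univ = Set.Ioi (0:ℝ) := by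
      rw [Set.image_univ, Real.range_exp]
    rw [← himg,
      integral_image_eq_integral_abs_deriv_smul MeasurableSet.univ
        (fun x _ => (Real.hasDerivAt_exp x).hasDerivWithinAt)
        (Real.exp_injective.injOn)
        (fun y => 1 / ((1 + y) * ((Real.log y) ^ 2 + π ^ 2)))]
    rw [Measure.restrict_univ]
    congr 1
    ext x
    rw [Real.log_exp, abs_of_pos (Real.exp_pos x), smul_eq_mul, hg]
    ring
  rw [hsub]
  have hneg : (∫ x : ℝ, g (-x)) = ∫ x : ℝ, g x := integral_neg_eq_self g volume
  have hsum : (∫ x : ℝ, g x) + ∫ x : ℝ, g (-x) = 1 := by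
    rw [← integral_add aux_g_integrable (aux_g_integrable.comp_neg)]
    have heq : (fun x : ℝ => g x + g (-x)) = fun x : ℝ => (x ^ 2 + π ^ 2)⁻¹ :=
      funext fun x => aux_key x
    rw [heq, aux_k_integral]
  rw [hneg] at hsum
  linarith
end

section
/- Let 0 < H < 1, a > 0 and q > 0. Then ∫_0^∞ [ ∫_ℝ |x|^q · (1/(√(2π) y^H)) e^{−x^2/(2 y^{2H})} dx ] · (y^{a−1} e^{−y}/Γ(a)) dy = √(2^q/π) Γ((1+q)/2) · Γ(Hq + a)/Γ(a). -/
open Real MeasureTheory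
open Set

lemma gauss_abs_moment {b : ℝ} (hb : 0 < b) {q : ℝ} (hq : -1 < q) :
    ∫ x : ℝ, |x| ^ q * Real.exp (-b * x ^ 2)
      = b ^ (-((q + 1) / 2)) * Real.Gamma ((q + 1) / 2) := by
  have h1 : ∫ x : ℝ, |x| ^ q * Real.exp (-b * x ^ 2)
      = 2 * ∫ x in Ioi (0:ℝ), x ^ q * Real.exp (-b * x ^ 2) := by
    rw [← integral_comp_abs (f := fun t => t ^ q * Real.exp (-b * t ^ 2))]
    congr 1; ext x; rw [sq_abs]
  have h2 : ∫ x in Ioi (0:ℝ), x ^ q * Real.exp (-b * x ^ 2)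
      = ∫ t in Ioi (0:ℝ),
          ((1/2) * t ^ ((1:ℝ)/2 - 1)) •
            ((t ^ ((1:ℝ)/2)) ^ q * Real.exp (-b * (t ^ ((1:ℝ)/2)) ^ 2)) := by
    rw [integral_comp_rpow_Ioi_of_pos (g := fun x => x ^ q * Real.exp (-b * x ^ 2))
      (by norm_num : (0:ℝ) < 1/2)]
  have h3 : ∫ t in Ioi (0:ℝ),
        ((1/2) * t ^ ((1:ℝ)/2 - 1)) •
          ((t ^ ((1:ℝ)/2)) ^ q * Real.exp (-b * (t ^ ((1:ℝ)/2)) ^ 2))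
      = ∫ t in Ioi (0:ℝ), (1/2) * (t ^ ((q + 1)/2 - 1) * Real.exp (-(b * t))) := by
    refine setIntegral_congr_fun measurableSet_Ioi (fun t ht => ?_)
    have ht0 : (0:ℝ) < t := ht
    have e1 : (t ^ ((1:ℝ)/2)) ^ (2:ℕ) = t := by
      rw [← rpow_natCast (t ^ ((1:ℝ)/2)) 2, ← rpow_mul ht0.le]
      norm_num
    have e2 : (t ^ ((1:ℝ)/2)) ^ q = t ^ (q/2) := by
      rw [← rpow_mul ht0.le]; ring_nf
    rw [smul_eq_mul, e1, e2, ← mul_assoc, mul_assoc (1/2), ← rpow_add ht0]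
    ring_nf
  rw [h1, h2, h3, integral_const_mul,
    integral_rpow_mul_exp_neg_mul_Ioi (by linarith : 0 < (q+1)/2) hb,
    div_rpow zero_le_one hb.le, one_rpow, rpow_neg hb.le]
  ring

/-- Exact absolute `q`-th moment of fractional Brownian motion time-changed by a
gamma random variable: for `0 < H < 1`, `a > 0`, `q > 0`,
`∫_0^∞ (∫_ℝ |x|^q (1/(√(2π) y^H)) e^{−x²/(2y^{2H})} dx) (y^{a−1} e^{−y}/Γ(a)) dy
  = √(2^q/π) Γ((1+q)/2) · Γ(Hq + a)/Γ(a)`. -/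
theorem flm_abs_moment (H a q : ℝ) (hH0 : 0 < H) (hH1 : H < 1)
    (ha : 0 < a) (hq : 0 < q) :
    ∫ y in Set.Ioi (0 : ℝ),
      (∫ x : ℝ, |x| ^ q * (1 / (Real.sqrt (2 * π) * y ^ H)) *
          Real.exp (-x ^ 2 / (2 * y ^ (2 * H)))) *
        (y ^ (a - 1) * Real.exp (-y) / Real.Gamma a)
      = Real.sqrt (2 ^ q / π) * Real.Gamma ((1 + q) / 2) *
          (Real.Gamma (H * q + a) / Real.Gamma a) := by
  have hΓa : 0 < Real.Gamma a := Real.Gamma_pos_of_pos ha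
  set C : ℝ := Real.sqrt (2 ^ q / π) * Real.Gamma ((1 + q) / 2) with hCdef
  have hconst : (2:ℝ) ^ ((q+1)/2) / Real.sqrt (2*π) = Real.sqrt (2 ^ q / π) := by
    have hπ : (0:ℝ) < π := pi_pos
    rw [sqrt_eq_rpow, sqrt_eq_rpow, div_rpow (by positivity) hπ.le,
      mul_rpow (by norm_num) hπ.le, ← rpow_mul (by norm_num : (0:ℝ) ≤ 2),
      show ((q:ℝ)+1)/2 = q*(1/2)+1/2 by ring, rpow_add (by norm_num : (0:ℝ) < 2)]
    have h2 : (0:ℝ) < (2:ℝ) ^ ((1:ℝ)/2) := by positivity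
    have hπ2 : (0:ℝ) < π ^ ((1:ℝ)/2) := by positivity
    field_simp
  have key : ∀ y ∈ Ioi (0:ℝ),
      (∫ x : ℝ, |x| ^ q * (1 / (Real.sqrt (2 * π) * y ^ H)) *
          Real.exp (-x ^ 2 / (2 * y ^ (2 * H)))) *
        (y ^ (a - 1) * Real.exp (-y) / Real.Gamma a)
      = (C / Real.Gamma a) * (Real.exp (-y) * y ^ (H * q + a - 1)) := by
    intro y hy
    have hy0 : (0:ℝ) < y := hy
    set b : ℝ := (2 * y ^ (2*H))⁻¹ with hb
    have hbpos : 0 < b := by positivity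
    have inner : (∫ x : ℝ, |x| ^ q * (1 / (Real.sqrt (2 * π) * y ^ H)) *
          Real.exp (-x ^ 2 / (2 * y ^ (2 * H))))
        = (1 / (Real.sqrt (2 * π) * y ^ H)) *
            ∫ x : ℝ, |x| ^ q * Real.exp (-b * x ^ 2) := by
      rw [← integral_const_mul]
      congr 1; ext x
      have : -x ^ 2 / (2 * y ^ (2*H)) = -b * x ^ 2 := by rw [hb]; ring
      rw [this]; ring
    have hbval : b ^ (-((q+1)/2)) = 2 ^ ((q+1)/2) * y ^ (H * (q+1)) := by
      rw [hb, ← rpow_neg_one, ← rpow_mul (by positivity), neg_one_mul, neg_neg,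
        mul_rpow (by norm_num) (by positivity), ← rpow_mul hy0.le]
      ring_nf
    have hΓq : Real.Gamma ((q+1)/2) = Real.Gamma ((1+q)/2) := by rw [add_comm]
    rw [inner, gauss_abs_moment hbpos (by linarith), hbval, hΓq]
    have hsplit : y ^ (H * (q+1)) = y ^ (H * q) * y ^ H := by
      rw [← rpow_add hy0]; ring_nf
    have hsplit2 : y ^ (H * q + a - 1) = y ^ (H * q) * y ^ (a - 1) := by
      rw [← rpow_add hy0]; ring_nf
    have hyH : (0:ℝ) < y ^ H := rpow_pos_of_pos hy0 H
    have hs2π : (0:ℝ) < Real.sqrt (2*π) := Real.sqrt_pos.mpr (by positivity)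
    rw [hsplit, hsplit2, hCdef, ← hconst]
    field_simp
  calc ∫ y in Ioi (0:ℝ),
      (∫ x : ℝ, |x| ^ q * (1 / (Real.sqrt (2 * π) * y ^ H)) *
          Real.exp (-x ^ 2 / (2 * y ^ (2 * H)))) *
        (y ^ (a - 1) * Real.exp (-y) / Real.Gamma a)
      = ∫ y in Ioi (0:ℝ), (C / Real.Gamma a) * (Real.exp (-y) * y ^ (H * q + a - 1)) :=
        setIntegral_congr_fun measurableSet_Ioi key
    _ = (C / Real.Gamma a) * ∫ y in Ioi (0:ℝ), Real.exp (-y) * y ^ (H * q + a - 1) :=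
        integral_const_mul _ _
    _ = (C / Real.Gamma a) * Real.Gamma (H * q + a) := by
        rw [← Real.Gamma_eq_integral (by positivity)]
    _ = C * (Real.Gamma (H * q + a) / Real.Gamma a) := by ring
end
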